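/- arXiv:2004.08080 — 3 statements merged into one kernel-verified Lean document; each statement's English description precedes it below -/
import Mathlib

section
/- Let G be a simple connected graph with n vertices, m edges, and maximum degree Δ. Let M(G) be the n×n matrix with entry √((d_i+d_j-2)/(d_i d_j)) if vertices v_i and v_j are adjacent and 0 otherwise, where d_i is the degree of v_i. Then the largest eigenvalue ρ_ABC(G) of M(G) satisfies ρ_ABC(G) ≤ √(Δ + (2m−n+1)/Δ − 2). -/
open scoped Classical
open Finset Matrix

noncomputable def ABCMatrix {n : ℕ} (G : SimpleGraph (Fin n)) : Matrix (Fin n) (Fin n) ℝ :=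
  fun i j => if G.Adj i j then
    Real.sqrt (((G.degree i : ℝ) + (G.degree j : ℝ) - 2) / ((G.degree i : ℝ) * (G.degree j : ℝ)))
  else 0

noncomputable def rhoABC {n : ℕ} (G : SimpleGraph (Fin n)) : ℝ :=
  sSup {r : ℝ | ∃ x : Fin n → ℝ, ∑ i, x i ^ 2 = 1 ∧ r = x ⬝ᵥ (ABCMatrix G).mulVec x}

/-!
For symmetric nonnegative `A` and a positive vector `s` with `A s ≤ c s`, the weighted AM-GM
inequality `2 xᵢ xⱼ ≤ xᵢ² sⱼ / sᵢ + xⱼ² sᵢ / sⱼ` gives `xᵀ A x ≤ c ‖x‖²`. Take `sᵢ = √dᵢ`: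
then `(M s)ᵢ √dᵢ = ∑_{j ∼ i} √(dᵢ + dⱼ - 2)`, and by Cauchy–Schwarz its square is at most
`dᵢ (dᵢ (dᵢ - 2) + Sᵢ)`, with `Sᵢ` the degree sum over the neighbours of `vᵢ`. Now `Sᵢ ≤ dᵢ Δ`,
and `Sᵢ ≤ 2m - n + 1` because `vᵢ` and its `n - 1 - dᵢ` non-neighbours contribute at least
`dᵢ` and `1` each to `2m`; together these give `dᵢ (dᵢ - 2) + Sᵢ ≤ dᵢ (Δ + (2m - n + 1) / Δ - 2)`.
-/

theorem two_mul_mul_le_sq_mul_div_add {a b r t : ℝ} (hr : 0 < r) (ht : 0 < t) :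
    2 * (a * b) ≤ a ^ 2 * (t / r) + b ^ 2 * (r / t) := by
  have h : a ^ 2 * (t / r) + b ^ 2 * (r / t) - 2 * (a * b) = (a * t - b * r) ^ 2 / (r * t) := by
    field_simp
    ring
  have : 0 ≤ (a * t - b * r) ^ 2 / (r * t) := by positivity
  linarith

theorem Matrix.dotProduct_mulVec_le_of_mulVec_le {ι : Type*} [Fintype ι] {A : Matrix ι ι ℝ}
    (hA : A.IsSymm) (hA0 : ∀ i j, 0 ≤ A i j) {s : ι → ℝ} (hs : ∀ i, 0 < s i) {c : ℝ}
    (hc : ∀ i, (A *ᵥ s) i ≤ c * s i) (x : ι → ℝ) :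
    x ⬝ᵥ A *ᵥ x ≤ c * ∑ i, x i ^ 2 := by
  set Q := ∑ i, ∑ j, A i j * (x i ^ 2 * (s j / s i))
  have hswap : ∑ i, ∑ j, A i j * (x j ^ 2 * (s i / s j)) = Q := by
    rw [Finset.sum_comm]
    simp only [hA.apply, Q]
  have hquad : 2 * (x ⬝ᵥ A *ᵥ x) ≤ 2 * Q := calc
    2 * (x ⬝ᵥ A *ᵥ x) = ∑ i, ∑ j, A i j * (2 * (x i * x j)) := by
      simp only [dotProduct, mulVec, mul_sum]
      exact sum_congr rfl fun i _ => sum_congr rfl fun j _ => by ring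
    _ ≤ ∑ i, ∑ j, A i j * (x i ^ 2 * (s j / s i) + x j ^ 2 * (s i / s j)) := by
      gcongr with i _ j _
      exacts [hA0 i j, two_mul_mul_le_sq_mul_div_add (hs i) (hs j)]
    _ = 2 * Q := by
      simp only [mul_add, sum_add_distrib, hswap]
      ring
  calc x ⬝ᵥ A *ᵥ x ≤ Q := by linarith
    _ = ∑ i, x i ^ 2 / s i * (A *ᵥ s) i := by
      simp only [Q, mulVec, dotProduct, mul_sum]
      exact sum_congr rfl fun i _ => sum_congr rfl fun j _ => by ring
    _ ≤ ∑ i, x i ^ 2 / s i * (c * s i) := by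
      gcongr with i _
      · exact div_nonneg (sq_nonneg _) (hs i).le
      · exact hc i
    _ = c * ∑ i, x i ^ 2 := by
      rw [mul_sum]
      exact sum_congr rfl fun i _ => by field_simp [(hs i).ne']

theorem mul_sub_two_add_le_mul_add_div_sub_two {d D S T : ℝ} (hd : 0 ≤ d) (hdD : d ≤ D)
    (hD : 0 < D) (hST : S ≤ T) (hSd : S ≤ d * D) :
    d * (d - 2) + S ≤ d * (D + T / D - 2) := by
  set u := T / D
  have hT : T = u * D := (div_mul_cancel₀ T hD.ne').symm
  rcases le_total u d with hud | hdu
  · nlinarith [mul_nonneg (sub_nonneg.2 hdD) (sub_nonneg.2 hud)]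
  · nlinarith [mul_le_mul_of_nonneg_left hdu hd]

namespace SimpleGraph

variable {V : Type*} [Fintype V] (G : SimpleGraph V) [DecidableRel G.Adj]

theorem sum_degree_neighborFinset_le (v : V) :
    ∑ w ∈ G.neighborFinset v, G.degree w ≤ G.degree v * G.maxDegree := by
  rw [← card_neighborFinset_eq_degree, ← smul_eq_mul]
  exact sum_le_card_nsmul _ _ _ fun w _ => G.degree_le_maxDegree w

theorem sq_sum_sqrt_degree_add_sub_two_le (v : V) :
    (∑ w ∈ G.neighborFinset v, √((G.degree v : ℝ) + G.degree w - 2)) ^ 2 ≤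
      G.degree v * (G.degree v * (G.degree v - 2) + ∑ w ∈ G.neighborFinset v, (G.degree w : ℝ)) :=
  calc _ ≤ #(G.neighborFinset v) *
          ∑ w ∈ G.neighborFinset v, √((G.degree v : ℝ) + G.degree w - 2) ^ 2 :=
        sq_sum_le_card_mul_sum_sq
    _ = G.degree v * ∑ w ∈ G.neighborFinset v, ((G.degree v : ℝ) + G.degree w - 2) := by
      rw [card_neighborFinset_eq_degree]
      refine congrArg _ (sum_congr rfl fun w hw => Real.sq_sqrt ?_)
      have hvw := (G.mem_neighborFinset v w).1 hw
      have : (1 : ℝ) ≤ G.degree v := by exact_mod_cast hvw.degree_pos_left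
      have : (1 : ℝ) ≤ G.degree w := by exact_mod_cast hvw.degree_pos_right
      linarith
    _ = _ := by
      simp only [add_sub_right_comm _ _ (2 : ℝ), sum_add_distrib, sum_const,
        card_neighborFinset_eq_degree, nsmul_eq_mul]

variable [DecidableEq V]

theorem sum_degree_add_card_compl_le (hdeg : ∀ v, 1 ≤ G.degree v) (s : Finset V) :
    ∑ v ∈ s, G.degree v + #sᶜ ≤ 2 * #G.edgeFinset := by
  rw [← G.sum_degrees_eq_twice_card_edges, ← sum_add_sum_compl s, card_eq_sum_ones sᶜ]
  exact Nat.add_le_add_left (sum_le_sum fun v _ => hdeg v) _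

theorem sum_degree_neighborFinset_add_card_le (hdeg : ∀ v, 1 ≤ G.degree v) (v : V) :
    ∑ w ∈ G.neighborFinset v, G.degree w + Fintype.card V ≤ 2 * #G.edgeFinset + 1 := by
  have hv := G.notMem_neighborFinset_self v
  have h := G.sum_degree_add_card_compl_le hdeg (insert v (G.neighborFinset v))
  have hcard : #(insert v (G.neighborFinset v)) ≤ Fintype.card V := card_le_univ _
  rw [sum_insert hv, card_compl, card_insert_of_notMem hv, card_neighborFinset_eq_degree] at h
  rw [card_insert_of_notMem hv, card_neighborFinset_eq_degree] at hcard
  omega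

end SimpleGraph

section ABCMatrix

variable {n : ℕ} (G : SimpleGraph (Fin n))

theorem ABCMatrix_isSymm : (ABCMatrix G).IsSymm := by
  refine Matrix.IsSymm.ext fun i j => ?_
  simp only [ABCMatrix, G.adj_comm j i, add_comm (G.degree j : ℝ), mul_comm (G.degree j : ℝ)]

theorem ABCMatrix_nonneg (i j : Fin n) : 0 ≤ ABCMatrix G i j := by
  unfold ABCMatrix
  split_ifs
  exacts [Real.sqrt_nonneg _, le_rfl]

theorem ABCMatrix_mul_sqrt_degree (i j : Fin n) :
    ABCMatrix G i j * √(G.degree j : ℝ) =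
      if G.Adj i j then √((G.degree i : ℝ) + G.degree j - 2) / √(G.degree i : ℝ) else 0 := by
  unfold ABCMatrix
  split_ifs with h
  · have hj : (0 : ℝ) < √(G.degree j : ℝ) :=
      Real.sqrt_pos.2 (by exact_mod_cast h.degree_pos_right)
    rw [Real.sqrt_div' _ (by positivity), Real.sqrt_mul (by positivity)]
    field_simp [hj.ne']
  · exact zero_mul _

theorem ABCMatrix_mulVec_sqrt_degree (i : Fin n) :
    (ABCMatrix G *ᵥ fun j => √(G.degree j : ℝ)) i =
      (∑ j ∈ G.neighborFinset i, √((G.degree i : ℝ) + G.degree j - 2)) / √(G.degree i : ℝ) := by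
  simp only [mulVec, dotProduct, ABCMatrix_mul_sqrt_degree, sum_ite, sum_const_zero, add_zero,
    ← sum_div, G.neighborFinset_eq_filter]

theorem ABCMatrix_mulVec_sqrt_degree_le (hdeg : ∀ i, 1 ≤ G.degree i) (i : Fin n) :
    (ABCMatrix G *ᵥ fun j => √(G.degree j : ℝ)) i ≤
      √((G.maxDegree : ℝ) + (2 * (#G.edgeFinset : ℝ) - n + 1) / G.maxDegree - 2) *
        √(G.degree i : ℝ) := by
  have hd : (0 : ℝ) < G.degree i := by exact_mod_cast hdeg i
  have hdD : (G.degree i : ℝ) ≤ G.maxDegree := by exact_mod_cast G.degree_le_maxDegree i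
  have hST : ∑ j ∈ G.neighborFinset i, (G.degree j : ℝ) ≤ 2 * (#G.edgeFinset : ℝ) - n + 1 := by
    have := G.sum_degree_neighborFinset_add_card_le hdeg i
    rw [Fintype.card_fin] at this
    have : ∑ j ∈ G.neighborFinset i, (G.degree j : ℝ) + n ≤ 2 * #G.edgeFinset + 1 := by
      exact_mod_cast this
    linarith
  have hSd : ∑ j ∈ G.neighborFinset i, (G.degree j : ℝ) ≤ G.degree i * G.maxDegree := by
    exact_mod_cast G.sum_degree_neighborFinset_le i
  set C := (G.maxDegree : ℝ) + (2 * (#G.edgeFinset : ℝ) - n + 1) / G.maxDegree - 2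
  have hrow := mul_sub_two_add_le_mul_add_div_sub_two hd.le hdD (hd.trans_le hdD) hST hSd
  have hsum : ∑ j ∈ G.neighborFinset i, √((G.degree i : ℝ) + G.degree j - 2) ≤
      G.degree i * √C := by
    have e : (G.degree i : ℝ) * √C = √(G.degree i * (G.degree i * C)) := by
      rw [← mul_assoc, Real.sqrt_mul (mul_self_nonneg _), Real.sqrt_mul_self hd.le]
    rw [e]
    exact Real.le_sqrt_of_sq_le ((G.sq_sum_sqrt_degree_add_sub_two_le i).trans
      (mul_le_mul_of_nonneg_left hrow hd.le))
  rw [ABCMatrix_mulVec_sqrt_degree, div_le_iff₀ (Real.sqrt_pos.2 hd), mul_assoc,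
    Real.mul_self_sqrt hd.le]
  linarith

end ABCMatrix

theorem stmt0 {n : ℕ} (hn : 2 ≤ n) (G : SimpleGraph (Fin n)) (hG : G.Connected) :
    rhoABC G ≤ Real.sqrt ((G.maxDegree : ℝ) +
      (2 * (G.edgeFinset.card : ℝ) - (n : ℝ) + 1) / (G.maxDegree : ℝ) - 2) := by
  have hdeg : ∀ i, 1 ≤ G.degree i := fun i => by
    obtain ⟨j, hji⟩ := Fintype.exists_ne_of_one_lt_card (by rw [Fintype.card_fin]; omega) i
    exact (hG.preconnected i j).degree_pos_left hji.symm
  refine Real.sSup_le ?_ (Real.sqrt_nonneg _)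
  rintro r ⟨x, hx, rfl⟩
  have := dotProduct_mulVec_le_of_mulVec_le (ABCMatrix_isSymm G) (ABCMatrix_nonneg G)
    (fun i => Real.sqrt_pos.2 (by exact_mod_cast hdeg i)) (ABCMatrix_mulVec_sqrt_degree_le G hdeg) x
  rwa [hx, mul_one] at this
end

section
/- For every connected graph G with n ≥ 3 vertices, ρ_ABC(G) ≤ √(2n−4), with equality if and only if G is the complete graph K_n. -/
open scoped Classical
open Finset Matrix

/-!
Write the entry of an edge `ij` as `√(dᵢ + dⱼ - 2) / √(dᵢ dⱼ)` and apply `2ab ≤ a² + b²` to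
`a = xᵢ / √dᵢ`, `b = xⱼ / √dⱼ`: this bounds `xᵀ M x` by `∑ᵢ wᵢ xᵢ²`, where `wᵢ` is the mean of
`√(dᵢ + dⱼ - 2)` over the neighbours `j` of `i` (and `0` at an isolated vertex). Degrees are at
most `n - 1`, so every `wᵢ` is at most `√(2n - 4)`. If `G ≠ Kₙ`, every non-isolated vertex `i`
has a neighbour `j` with `i` or `j` non-universal (a universal vertex is adjacent to every
non-universal one), so every `wᵢ` falls strictly short, and so does their maximum. For `Kₙ` the
constant unit vector attains the bound.
-/

open SimpleGraph

lemma mul_sqrt_div_mul_mul_le (a b t : ℝ) {p q : ℝ} (hp : 0 ≤ p) (hq : 0 ≤ q) :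
    a * √(t / (p * q)) * b ≤ √t * ((a ^ 2 / p + b ^ 2 / q) / 2) := by
  have hamgm := two_mul_le_add_sq (a / √p) (b / √q)
  rw [div_pow, div_pow, Real.sq_sqrt hp, Real.sq_sqrt hq] at hamgm
  have hsplit : a * √(t / (p * q)) * b = √t * (a / √p * (b / √q)) := by
    rw [Real.sqrt_div' t (mul_nonneg hp hq), Real.sqrt_mul hp]
    ring
  rw [hsplit]
  exact mul_le_mul_of_nonneg_left (by linarith) (Real.sqrt_nonneg t)

variable {n : ℕ} (G : SimpleGraph (Fin n))

noncomputable def abcWeight (i : Fin n) : ℝ :=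
  (∑ j ∈ G.neighborFinset i, √((G.degree i : ℝ) + (G.degree j : ℝ) - 2)) / G.degree i

lemma abcWeight_nonneg (i : Fin n) : 0 ≤ abcWeight G i := by
  unfold abcWeight
  positivity

lemma dotProduct_mulVec_ABCMatrix_le (x : Fin n → ℝ) :
    x ⬝ᵥ ABCMatrix G *ᵥ x ≤ ∑ i, abcWeight G i * x i ^ 2 := by
  set f : Fin n → Fin n → ℝ := fun i j =>
    if G.Adj i j then √((G.degree i : ℝ) + (G.degree j : ℝ) - 2) * (x i ^ 2 / G.degree i)
    else 0 with hf
  have hentry : ∀ i j, x i * ABCMatrix G i j * x j ≤ (f i j + f j i) / 2 := by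
    intro i j
    by_cases h : G.Adj i j
    · simp only [hf, ABCMatrix, if_pos h, if_pos h.symm, add_comm (G.degree j : ℝ)]
      calc _ ≤ _ := mul_sqrt_div_mul_mul_le _ _ _ (Nat.cast_nonneg _) (Nat.cast_nonneg _)
        _ = _ := by ring
    · simp [hf, ABCMatrix, h, G.adj_comm j i]
  have hrow : ∀ i, ∑ j, f i j = abcWeight G i * x i ^ 2 := by
    intro i
    rw [abcWeight, div_mul_eq_mul_div, sum_mul, sum_div, neighborFinset_eq_filter, sum_filter]
    exact sum_congr rfl fun j _ => by simp only [hf]; split_ifs <;> ring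
  calc x ⬝ᵥ ABCMatrix G *ᵥ x = ∑ i, ∑ j, x i * ABCMatrix G i j * x j := by
        simp only [dotProduct, mulVec, mul_sum, mul_assoc]
    _ ≤ ∑ i, ∑ j, (f i j + f j i) / 2 := sum_le_sum fun i _ => sum_le_sum fun j _ => hentry i j
    _ = ∑ i, ∑ j, f i j := by
        simp only [add_div, sum_add_distrib]
        rw [sum_comm (f := fun i j => f j i / 2)]
        simp only [← sum_div]
        ring
    _ = ∑ i, abcWeight G i * x i ^ 2 := sum_congr rfl fun i _ => hrow i

lemma dotProduct_mulVec_ABCMatrix_le_of_forall_abcWeight_le {β : ℝ} (hβ : ∀ i, abcWeight G i ≤ β)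
    {x : Fin n → ℝ} (hx : ∑ i, x i ^ 2 = 1) : x ⬝ᵥ ABCMatrix G *ᵥ x ≤ β :=
  calc x ⬝ᵥ ABCMatrix G *ᵥ x ≤ ∑ i, abcWeight G i * x i ^ 2 := dotProduct_mulVec_ABCMatrix_le G x
    _ ≤ ∑ i, β * x i ^ 2 := sum_le_sum fun i _ => mul_le_mul_of_nonneg_right (hβ i) (sq_nonneg _)
    _ = β := by rw [← mul_sum, hx, mul_one]

lemma rhoABC_le_of_forall_abcWeight_le {β : ℝ} (hβ : ∀ i, abcWeight G i ≤ β) (hβ₀ : 0 ≤ β) :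
    rhoABC G ≤ β :=
  Real.sSup_le (by
    rintro r ⟨x, hx, rfl⟩
    exact dotProduct_mulVec_ABCMatrix_le_of_forall_abcWeight_le G hβ hx) hβ₀

lemma cast_degree_le (i : Fin n) : (G.degree i : ℝ) ≤ n - 1 := by
  have h := G.degree_lt_card_verts i
  rw [Fintype.card_fin] at h
  have h' : (G.degree i : ℝ) + 1 ≤ n := by exact_mod_cast h
  linarith

lemma sqrt_degree_add_degree_sub_two_le (i j : Fin n) :
    √((G.degree i : ℝ) + (G.degree j : ℝ) - 2) ≤ √(2 * (n : ℝ) - 4) :=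
  Real.sqrt_le_sqrt (by linarith [cast_degree_le G i, cast_degree_le G j])

lemma sqrt_degree_add_degree_sub_two_lt (hn : 3 ≤ n) {j : Fin n} (hj : ¬ G.IsUniversal j)
    (i : Fin n) : √((G.degree i : ℝ) + (G.degree j : ℝ) - 2) < √(2 * (n : ℝ) - 4) := by
  have hdj : G.degree j + 1 < n := by
    have := (G.degree_lt_card_sub_one j).2 hj
    rw [Fintype.card_fin] at this
    omega
  have hdj' : (G.degree j : ℝ) + 1 + 1 ≤ n := by exact_mod_cast hdj
  have hn' : (3 : ℝ) ≤ n := by exact_mod_cast hn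
  rw [Real.sqrt_lt_sqrt_iff_of_pos (by linarith)]
  linarith [cast_degree_le G i]

lemma abcWeight_le_sqrt (i : Fin n) : abcWeight G i ≤ √(2 * (n : ℝ) - 4) := by
  refine div_le_of_le_mul₀ (Nat.cast_nonneg _) (Real.sqrt_nonneg _) ?_
  calc _ ≤ ∑ j ∈ G.neighborFinset i, √(2 * (n : ℝ) - 4) :=
        sum_le_sum fun j _ => sqrt_degree_add_degree_sub_two_le G i j
    _ = _ := by rw [sum_const, card_neighborFinset_eq_degree, nsmul_eq_mul, mul_comm]

lemma abcWeight_lt_sqrt (hn : 3 ≤ n) (hG : G ≠ ⊤) (i : Fin n) :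
    abcWeight G i < √(2 * (n : ℝ) - 4) := by
  have hn' : (3 : ℝ) ≤ n := by exact_mod_cast hn
  rcases (Nat.cast_nonneg (α := ℝ) (G.degree i)).eq_or_lt with hdi | hdi
  · rw [abcWeight, ← hdi, div_zero]
    exact Real.sqrt_pos.2 (by linarith)
  have hstrict : ∃ j ∈ G.neighborFinset i,
      √((G.degree i : ℝ) + (G.degree j : ℝ) - 2) < √(2 * (n : ℝ) - 4) := by
    by_cases hi : G.IsUniversal i
    · obtain ⟨u, hu⟩ : ∃ u, ¬ G.IsUniversal u := by
        simpa [eq_top_iff_forall_isUniversal] using hG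
      have hiu : i ≠ u := by rintro rfl; exact hu hi
      exact ⟨u, (G.mem_neighborFinset i u).2 (hi hiu), sqrt_degree_add_degree_sub_two_lt G hn hu i⟩
    · obtain ⟨j, hj⟩ := (G.degree_pos_iff_exists_adj i).1 (by exact_mod_cast hdi)
      refine ⟨j, (G.mem_neighborFinset i j).2 hj, ?_⟩
      rw [add_comm (G.degree i : ℝ)]
      exact sqrt_degree_add_degree_sub_two_lt G hn hi j
  rw [abcWeight, div_lt_iff₀ hdi]
  calc _ < ∑ j ∈ G.neighborFinset i, √(2 * (n : ℝ) - 4) :=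
        sum_lt_sum (fun j _ => sqrt_degree_add_degree_sub_two_le G i j) hstrict
    _ = _ := by rw [sum_const, card_neighborFinset_eq_degree, nsmul_eq_mul, mul_comm]

lemma rhoABC_le_sqrt : rhoABC G ≤ √(2 * (n : ℝ) - 4) :=
  rhoABC_le_of_forall_abcWeight_le G (abcWeight_le_sqrt G) (Real.sqrt_nonneg _)

lemma rhoABC_lt_sqrt (hn : 3 ≤ n) (hG : G ≠ ⊤) : rhoABC G < √(2 * (n : ℝ) - 4) := by
  have : Nonempty (Fin n) := ⟨⟨0, by omega⟩⟩
  obtain ⟨i, -, hi⟩ := exists_max_image univ (abcWeight G) univ_nonempty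
  exact (rhoABC_le_of_forall_abcWeight_le G (fun j => hi j (mem_univ j))
    (abcWeight_nonneg G i)).trans_lt (abcWeight_lt_sqrt G hn hG i)

lemma le_rhoABC {x : Fin n → ℝ} (hx : ∑ i, x i ^ 2 = 1) : x ⬝ᵥ ABCMatrix G *ᵥ x ≤ rhoABC G :=
  le_csSup ⟨_, fun _ ⟨_, hy, hr⟩ =>
    hr ▸ dotProduct_mulVec_ABCMatrix_le_of_forall_abcWeight_le G (abcWeight_le_sqrt G) hy⟩
    ⟨x, hx, rfl⟩

lemma ABCMatrix_top_apply (hn : 2 ≤ n) (i j : Fin n) :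
    ABCMatrix (⊤ : SimpleGraph (Fin n)) i j =
      if i = j then 0 else √(2 * (n : ℝ) - 4) / (n - 1) := by
  -- `ABCMatrix` sees the degrees through the classical `DecidableRel` instance, not through
  -- `Top.adjDecidable`, hence the instance-generic statement.
  have hdeg : ∀ k [Fintype ((⊤ : SimpleGraph (Fin n)).neighborSet k)],
      ((⊤ : SimpleGraph (Fin n)).degree k : ℝ) = n - 1 := by
    intro k _
    have h : (⊤ : SimpleGraph (Fin n)).degree k = n - 1 := by
      convert (degree_eq_card_sub_one _ k).2 IsUniversal.top
      simp
    rw [h, Nat.cast_sub (by omega), Nat.cast_one]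
  have hn' : (2 : ℝ) ≤ n := by exact_mod_cast hn
  by_cases h : i = j
  · simp [ABCMatrix, h]
  · rw [ABCMatrix, if_pos ((top_adj i j).2 h), if_neg h]
    simp only [hdeg]
    rw [Real.sqrt_div' _ (by nlinarith), Real.sqrt_mul_self (by linarith)]
    ring_nf

lemma rhoABC_top (hn : 2 ≤ n) : rhoABC (⊤ : SimpleGraph (Fin n)) = √(2 * (n : ℝ) - 4) := by
  refine le_antisymm (rhoABC_le_sqrt ⊤) ?_
  have hn' : (2 : ℝ) ≤ n := by exact_mod_cast hn
  set x : Fin n → ℝ := fun _ => (√n)⁻¹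
  have hx2 : ∀ i, x i ^ 2 = (n : ℝ)⁻¹ := fun i => by
    rw [inv_pow, Real.sq_sqrt (by linarith)]
  have hx : ∑ i, x i ^ 2 = 1 := by
    simp only [hx2, sum_const, card_univ, Fintype.card_fin, nsmul_eq_mul]
    field_simp
  calc √(2 * (n : ℝ) - 4) = x ⬝ᵥ ABCMatrix ⊤ *ᵥ x := by
        simp only [dotProduct, mulVec, ABCMatrix_top_apply hn, x]
        simp only [ite_mul, zero_mul, sum_ite, sum_const_zero, filter_ne, sum_const, mem_univ,
          card_erase_of_mem, card_univ, Fintype.card_fin, nsmul_eq_mul, zero_add]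
        rw [Nat.cast_sub (by omega), Nat.cast_one]
        have : √(n : ℝ) ≠ 0 := by positivity
        have : (n : ℝ) - 1 ≠ 0 := by linarith
        field_simp
        rw [Real.sq_sqrt (by linarith)]
        ring
    _ ≤ rhoABC ⊤ := le_rhoABC ⊤ hx

theorem stmt8_general {n : ℕ} (hn : 3 ≤ n) (G : SimpleGraph (Fin n)) :
    rhoABC G ≤ Real.sqrt (2 * (n : ℝ) - 4) ∧
      (rhoABC G = Real.sqrt (2 * (n : ℝ) - 4) ↔ G = ⊤) := by
  refine ⟨rhoABC_le_sqrt G, fun h => ?_, fun h => h ▸ rhoABC_top (by omega)⟩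
  by_contra hG
  exact (rhoABC_lt_sqrt G hn hG).ne h

theorem stmt8 {n : ℕ} (hn : 3 ≤ n) (G : SimpleGraph (Fin n)) (hG : G.Connected) :
    rhoABC G ≤ Real.sqrt (2 * (n : ℝ) - 4) ∧
      (rhoABC G = Real.sqrt (2 * (n : ℝ) - 4) ↔ G = ⊤) :=
  stmt8_general hn G
end

section
/- Let n ≥ 4 and let S_{n−3,1} be the double star obtained from an edge v_1 v_2 by attaching n−3 pendant vertices to v_1 and one pendant vertex to v_2. Then ρ_ABC(S_{n−3,1}) > √(n − 3.5). -/
open scoped Classical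
open Finset Matrix

noncomputable def doubleStar (n : ℕ) : SimpleGraph (Fin n) :=
  SimpleGraph.fromRel (fun i j => (i.val = 0 ∧ j.val ≠ 2) ∨ (i.val = 1 ∧ j.val = 2))

/-!
For a symmetric nonnegative matrix `A` with zero diagonal, the vector `x = A v + ‖A v‖ • e_v`
satisfies `x ⬝ᵥ x = 2‖A v‖²` and `x ⬝ᵥ A *ᵥ x ≥ 2‖A v‖³`, so its Rayleigh quotient is at least
`‖A v‖`. Hence `ρ_ABC` is at least the Euclidean norm of every row of the ABC matrix. At the
centre `v₁` of `S_{n-3,1}` the squared row norm is `1/2 + (n-3)²/(n-2) = n - 3.5 + 1/(n-2)`.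
-/

theorem Fin.sum_univ_eq_of_forall_three_le {M : Type*} [AddCommMonoid M] {n : ℕ} (hn : 3 ≤ n)
    (f : Fin n → M) (c : M) (hc : ∀ j : Fin n, 3 ≤ j.val → f j = c) :
    ∑ j, f j = f ⟨0, by omega⟩ + f ⟨1, by omega⟩ + f ⟨2, by omega⟩ + (n - 3) • c := by
  obtain ⟨m, rfl⟩ := Nat.exists_eq_add_of_le' hn
  have hleaves : ∀ i : Fin m, f i.succ.succ.succ = c := fun i => hc _ (by simp)
  simp only [Fin.sum_univ_succ, hleaves, sum_const, Nat.add_sub_cancel]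
  simp only [add_assoc]
  rfl

namespace Matrix

variable {ι : Type*} [Fintype ι]

theorem bddAbove_dotProduct_mulVec_of_sum_sq_eq_one (A : Matrix ι ι ℝ) :
    BddAbove {r : ℝ | ∃ x : ι → ℝ, ∑ i, x i ^ 2 = 1 ∧ r = x ⬝ᵥ A *ᵥ x} := by
  refine ⟨∑ i, ∑ j, |A i j|, ?_⟩
  rintro r ⟨x, hx, rfl⟩
  have hx_le : ∀ i, |x i| ≤ 1 := fun i => by
    rw [← sq_le_one_iff_abs_le_one, ← hx]
    exact single_le_sum (fun j _ => sq_nonneg (x j)) (mem_univ i)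
  simp only [dotProduct, mulVec, Finset.mul_sum]
  gcongr with i _ j _
  calc x i * (A i j * x j) ≤ |x i * (A i j * x j)| := le_abs_self _
    _ = |A i j| * (|x i| * |x j|) := by rw [abs_mul, abs_mul]; ring
    _ ≤ |A i j| * (1 * 1) := by gcongr; exacts [hx_le i, hx_le j]
    _ = |A i j| := by ring

variable [DecidableEq ι]

theorem exists_sqrt_dotProduct_row_mul_le {A : Matrix ι ι ℝ} (hA : A.IsSymm)
    (hA_nonneg : ∀ i j, 0 ≤ A i j) {v : ι} (hv : A v v = 0) :
    ∃ x ≠ 0, √(A v ⬝ᵥ A v) * (x ⬝ᵥ x) ≤ x ⬝ᵥ A *ᵥ x := by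
  set R := A v ⬝ᵥ A v
  have hR_nonneg : 0 ≤ R := Finset.sum_nonneg fun j _ => mul_self_nonneg (A v j)
  rcases hR_nonneg.eq_or_lt with hR | hR
  · refine ⟨Pi.single v 1, by simp, ?_⟩
    rw [← hR]
    simp [hv]
  set x := A v + √R • Pi.single v 1
  have hx_self : x ⬝ᵥ x = 2 * R := by
    simp only [x, add_dotProduct, dotProduct_add, smul_dotProduct, dotProduct_smul,
      single_dotProduct, dotProduct_single, smul_eq_mul, Pi.add_apply, Pi.smul_apply,
      Pi.single_eq_same, hv]
    linear_combination Real.mul_self_sqrt hR.le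
  have hQ_row : 0 ≤ A v ⬝ᵥ A *ᵥ A v :=
    Finset.sum_nonneg fun i _ => mul_nonneg (hA_nonneg v i)
      (Finset.sum_nonneg fun j _ => mul_nonneg (hA_nonneg i j) (hA_nonneg v j))
  have hx_quad : x ⬝ᵥ A *ᵥ x = A v ⬝ᵥ A *ᵥ A v + 2 * √R * R := by
    have hcol : A.col v = A v := funext fun i => hA.apply v i
    have hrow : (A *ᵥ A v) v = R := rfl
    simp only [x, mulVec_add, mulVec_smul, mulVec_single_one, add_dotProduct, dotProduct_add,
      smul_dotProduct, dotProduct_smul, single_dotProduct, smul_eq_mul, hcol, hrow, hv]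
    ring
  refine ⟨x, fun h => ?_, ?_⟩
  · rw [h, zero_dotProduct] at hx_self
    linarith
  · rw [hx_self, hx_quad]
    nlinarith

end Matrix

section ABC

variable {n : ℕ} (G : SimpleGraph (Fin n))

theorem ABCMatrix_self (i : Fin n) : ABCMatrix G i i = 0 := if_neg G.irrefl

theorem ABCMatrix_of_not_adj {i j : Fin n} (h : ¬ G.Adj i j) : ABCMatrix G i j = 0 := if_neg h

theorem ABCMatrix_mul_self_of_adj {i j : Fin n} (h : G.Adj i j) :
    ABCMatrix G i j * ABCMatrix G i j =
      ((G.degree i : ℝ) + G.degree j - 2) / ((G.degree i : ℝ) * G.degree j) := by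
  have hi : (1 : ℝ) ≤ G.degree i := by
    exact_mod_cast (G.degree_pos_iff_exists_adj i).2 ⟨j, h⟩
  have hj : (1 : ℝ) ≤ G.degree j := by
    exact_mod_cast (G.degree_pos_iff_exists_adj j).2 ⟨i, h.symm⟩
  rw [ABCMatrix, if_pos h, Real.mul_self_sqrt (div_nonneg (by linarith) (by positivity))]

theorem le_rhoABC_of_mul_dotProduct_self_le {x : Fin n → ℝ} (hx : x ≠ 0) {r : ℝ}
    (h : r * (x ⬝ᵥ x) ≤ x ⬝ᵥ ABCMatrix G *ᵥ x) : r ≤ rhoABC G := by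
  have hN : 0 < x ⬝ᵥ x :=
    (Finset.sum_nonneg fun i _ => mul_self_nonneg (x i)).lt_of_ne'
      (dotProduct_self_eq_zero.not.2 hx)
  set y := (√(x ⬝ᵥ x))⁻¹ • x
  have hy : ∑ i, y i ^ 2 = 1 := by
    simp only [y, Pi.smul_apply, smul_eq_mul, mul_pow, inv_pow, Real.sq_sqrt hN.le, ← mul_sum]
    rw [inv_mul_eq_one₀ hN.ne', dotProduct]
    simp only [sq]
  have hQy : y ⬝ᵥ ABCMatrix G *ᵥ y = (x ⬝ᵥ ABCMatrix G *ᵥ x) / (x ⬝ᵥ x) := by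
    simp only [y, mulVec_smul, dotProduct_smul, smul_dotProduct, smul_eq_mul]
    rw [← mul_assoc, ← mul_inv, Real.mul_self_sqrt hN.le, inv_mul_eq_div]
  calc r ≤ (x ⬝ᵥ ABCMatrix G *ᵥ x) / (x ⬝ᵥ x) := (le_div_iff₀ hN).2 h
    _ = y ⬝ᵥ ABCMatrix G *ᵥ y := hQy.symm
    _ ≤ rhoABC G := le_csSup (bddAbove_dotProduct_mulVec_of_sum_sq_eq_one _) ⟨y, hy, rfl⟩

theorem sqrt_dotProduct_row_le_rhoABC (v : Fin n) :
    √(ABCMatrix G v ⬝ᵥ ABCMatrix G v) ≤ rhoABC G := by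
  obtain ⟨x, hx, hle⟩ := exists_sqrt_dotProduct_row_mul_le (ABCMatrix_isSymm G)
    (ABCMatrix_nonneg G) (ABCMatrix_self G v)
  exact le_rhoABC_of_mul_dotProduct_self_le G hx hle

end ABC

section doubleStar

variable {n : ℕ}

theorem doubleStar_adj {i j : Fin n} : (doubleStar n).Adj i j ↔ i ≠ j ∧
    ((i.val = 0 ∧ j.val ≠ 2) ∨ (i.val = 1 ∧ j.val = 2) ∨
      (j.val = 0 ∧ i.val ≠ 2) ∨ (j.val = 1 ∧ i.val = 2)) := by
  simp only [doubleStar, SimpleGraph.fromRel_adj]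
  tauto

theorem degree_doubleStar_of_val_eq_zero (hn : 3 ≤ n) {v : Fin n} (hv : v.val = 0) :
    (doubleStar n).degree v = n - 2 := by
  rw [← Nat.cast_id ((doubleStar n).degree v), SimpleGraph.degree_eq_sum_if_adj,
    Fin.sum_univ_eq_of_forall_three_le hn _ 1
      fun j hj => if_pos (doubleStar_adj.2 ⟨by grind, by omega⟩)]
  simp [doubleStar_adj, Fin.ext_iff, hv]
  omega

theorem degree_doubleStar_of_val_eq_one (hn : 3 ≤ n) {v : Fin n} (hv : v.val = 1) :
    (doubleStar n).degree v = 2 := by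
  rw [← Nat.cast_id ((doubleStar n).degree v), SimpleGraph.degree_eq_sum_if_adj,
    Fin.sum_univ_eq_of_forall_three_le hn _ 0
      fun j hj => if_neg fun h => by grind [doubleStar_adj]]
  simp [doubleStar_adj, Fin.ext_iff, hv]

theorem degree_doubleStar_of_three_le_val {v : Fin n} (hv : 3 ≤ v.val) :
    (doubleStar n).degree v = 1 := by
  rw [← Nat.cast_id ((doubleStar n).degree v), SimpleGraph.degree_eq_sum_if_adj,
    Fin.sum_univ_eq_of_forall_three_le (by omega) _ 0
      fun j hj => if_neg fun h => by grind [doubleStar_adj]]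
  simp [doubleStar_adj, Fin.ext_iff]
  split_ifs <;> omega

theorem ABCMatrix_doubleStar_row_zero_dotProduct_self (hn : 3 ≤ n) :
    ABCMatrix (doubleStar n) ⟨0, by omega⟩ ⬝ᵥ ABCMatrix (doubleStar n) ⟨0, by omega⟩ =
      1 / 2 + ((n : ℝ) - 3) ^ 2 / ((n : ℝ) - 2) := by
  have hn' : (3 : ℝ) ≤ n := by exact_mod_cast hn
  have hdeg : ((doubleStar n).degree ⟨0, by omega⟩ : ℝ) = n - 2 := by
    rw [degree_doubleStar_of_val_eq_zero hn rfl, Nat.cast_sub (by omega), Nat.cast_ofNat]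
  have hleaf : ∀ j : Fin n, 3 ≤ j.val → ABCMatrix (doubleStar n) ⟨0, by omega⟩ j *
      ABCMatrix (doubleStar n) ⟨0, by omega⟩ j = ((n : ℝ) - 3) / (n - 2) := by
    intro j hj
    have hadj : (doubleStar n).Adj ⟨0, by omega⟩ j :=
      doubleStar_adj.2 ⟨by grind, Or.inl ⟨rfl, by omega⟩⟩
    rw [ABCMatrix_mul_self_of_adj _ hadj, hdeg, degree_doubleStar_of_three_le_val hj]
    push_cast
    ring_nf
  rw [dotProduct, Fin.sum_univ_eq_of_forall_three_le hn _ _ hleaf, ABCMatrix_self,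
    ABCMatrix_mul_self_of_adj _ (doubleStar_adj.2 ⟨by simp [Fin.ext_iff], by simp⟩), hdeg,
    degree_doubleStar_of_val_eq_one hn rfl,
    ABCMatrix_of_not_adj _ (fun h => by simp [doubleStar_adj] at h), nsmul_eq_mul,
    Nat.cast_sub (by omega)]
  have : (n : ℝ) - 2 ≠ 0 := by linarith
  field_simp
  ring

end doubleStar

theorem stmt13 {n : ℕ} (hn : 4 ≤ n) :
    Real.sqrt ((n : ℝ) - 3.5) < rhoABC (doubleStar n) := by
  have hn' : (4 : ℝ) ≤ n := by exact_mod_cast hn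
  calc √((n : ℝ) - 3.5) < √(1 / 2 + ((n : ℝ) - 3) ^ 2 / ((n : ℝ) - 2)) := by
        refine Real.sqrt_lt_sqrt (by linarith) ?_
        have h2 : (0 : ℝ) < n - 2 := by linarith
        have : ((n : ℝ) - 3) ^ 2 / (n - 2) = n - 4 + 1 / (n - 2) := by
          field_simp
          ring
        linarith [one_div_pos.2 h2]
    _ = √(ABCMatrix (doubleStar n) ⟨0, by omega⟩ ⬝ᵥ
          ABCMatrix (doubleStar n) ⟨0, by omega⟩) := by
        rw [ABCMatrix_doubleStar_row_zero_dotProduct_self (by omega)]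
    _ ≤ rhoABC (doubleStar n) := sqrt_dotProduct_row_le_rhoABC _ _
end
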